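/- arXiv:1508.07726 — 3 statements merged into one kernel-verified Lean document; each statement's English description precedes it below -/
import Mathlib

section
/- Let (G,·) be a group, θ an automorphism of G, b ∈ G with θ(b) = b and θ^{n-1}(x) = b·x·b⁻¹ for all x ∈ G (n ≥ 2). Define f(x₁,…,xₙ) = x₁·θ(x₂)·θ²(x₃)⋯θ^{n-1}(xₙ)·b. Then f is n-ary associative. -/
section HG
variable {G : Type*} [Group G]

private lemma hg_iter_one (θ : G ≃* G) (k : ℕ) : (⇑θ)^[k] (1 : G) = 1 := by
  induction k with
  | zero => rfl
  | succ k ih => simp [Function.iterate_succ_apply', ih]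

private lemma hg_iter_mul (θ : G ≃* G) (k : ℕ) (a c : G) :
    (⇑θ)^[k] (a * c) = (⇑θ)^[k] a * (⇑θ)^[k] c := by
  induction k with
  | zero => rfl
  | succ k ih => simp [Function.iterate_succ_apply', ih, map_mul]

private lemma hg_iter_prod (θ : G ≃* G) (k : ℕ) (l : List G) :
    (⇑θ)^[k] l.prod = (l.map ((⇑θ)^[k])).prod := by
  induction l with
  | nil => simpa using hg_iter_one θ k
  | cons a l ih => simp [hg_iter_mul, ih]

private lemma hg_iter_b (θ : G ≃* G) (b : G) (hb : θ b = b) (k : ℕ) :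
    (⇑θ)^[k] b = b := by
  induction k with
  | zero => rfl
  | succ k ih => simp [Function.iterate_succ_apply', ih, hb]

private lemma hg_conj_list (b : G) (l : List G) :
    b * l.prod = (l.map (fun a => b * a * b⁻¹)).prod * b := by
  induction l with
  | nil => simp
  | cons a l ih =>
      simp only [List.prod_cons, List.map_cons]
      rw [show b * (a * l.prod) = (b * a * b⁻¹) * (b * l.prod) by group, ih]
      group

private lemma hg_ofFn_range (g : ℕ → G) (n : ℕ) :
    (List.ofFn (fun i : Fin n => g i)) = (List.range n).map g := by
  apply List.ext_getElem <;> simp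

private lemma key (n : ℕ) (hn : 2 ≤ n) (θ : G ≃* G) (b : G) (hb : θ b = b)
    (hpow : ∀ x : G, (⇑θ)^[n - 1] x = b * x * b⁻¹)
    (f : (ℕ → G) → G)
    (hf : ∀ x : ℕ → G,
      f x = (List.ofFn fun i : Fin n => (⇑θ)^[(i : ℕ)] (x (i : ℕ))).prod * b)
    (x : ℕ → G) (i : ℕ) (hi : i < n) :
    f (fun k => if k < i then x k else if k = i then f (fun t => x (i + t))
        else x (k + n - 1))
      = ((List.range (2 * n - 1)).map (fun m => (⇑θ)^[m] (x m))).prod * b * b := by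
  set y : ℕ → G := fun k => if k < i then x k else if k = i then f (fun t => x (i + t))
        else x (k + n - 1) with hy
  set q := n - 1 - i with hqdef
  have hq : n = (i + 1) + q := by omega
  have hrange : List.range n = (List.range i ++ [i]) ++ (List.range q).map (fun t => i + 1 + t) := by
    conv_lhs => rw [hq]
    rw [List.range_add, List.range_succ]
  -- expand f y and split the product
  rw [hf, hg_ofFn_range (fun m => (⇑θ)^[m] (y m)), hrange, List.map_append, List.map_append,
    List.prod_append, List.prod_append, List.map_map, List.map_singleton,
    List.prod_singleton]
  -- head part: y m = x m for m < i
  have hhead : (List.range i).map (fun m => (⇑θ)^[m] (y m))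
      = (List.range i).map (fun m => (⇑θ)^[m] (x m)) := by
    apply List.map_congr_left
    intro m hm
    rw [List.mem_range] at hm
    simp [hy, hm]
  have hyi : y i = f (fun t => x (i + t)) := by simp [hy]
  -- middle expansion
  have hmid : (⇑θ)^[i] (y i)
      = ((List.range n).map (fun t => (⇑θ)^[i + t] (x (i + t)))).prod * b := by
    rw [hyi, hf, hg_ofFn_range (fun t => (⇑θ)^[t] (x (i + t))), hg_iter_mul, hg_iter_prod,
      hg_iter_b θ b hb, List.map_map]
    congr 2
    apply List.map_congr_left
    intro t _
    simp [Function.comp, ← Function.iterate_add_apply]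
  -- tail values
  have htail : ((fun m => (⇑θ)^[m] (y m)) ∘ fun t => i + 1 + t)
      = fun t => (⇑θ)^[i + 1 + t] (x (i + 1 + t + n - 1)) := by
    funext t
    have h1 : ¬ (i + 1 + t < i) := by omega
    have h2 : ¬ (i + 1 + t = i) := by omega
    simp [hy, h1, h2]
  rw [hhead, hmid, htail]
  -- combine head and middle
  have hAM : ((List.range i).map (fun m => (⇑θ)^[m] (x m))).prod *
      ((List.range n).map (fun t => (⇑θ)^[i + t] (x (i + t)))).prod
      = ((List.range (i + n)).map (fun m => (⇑θ)^[m] (x m))).prod := by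
    rw [List.range_add, List.map_append, List.prod_append, List.map_map]
    congr 2
  -- push b through the tail
  have hbT : b * ((List.range q).map (fun t => (⇑θ)^[i + 1 + t] (x (i + 1 + t + n - 1)))).prod
      = ((List.range q).map (fun t => (⇑θ)^[i + n + t] (x (i + n + t)))).prod * b := by
    rw [hg_conj_list, List.map_map]
    congr 2
    apply List.map_congr_left
    intro t _
    have h1 : i + 1 + t + n - 1 = i + n + t := by omega
    have h2 : (n - 1) + (i + 1 + t) = i + n + t := by omega
    simp only [Function.comp_apply]
    rw [← hpow, ← Function.iterate_add_apply, h2, h1]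
  -- final combination
  have hfin : ((List.range (i + n)).map (fun m => (⇑θ)^[m] (x m))).prod *
      ((List.range q).map (fun t => (⇑θ)^[i + n + t] (x (i + n + t)))).prod
      = ((List.range (2 * n - 1)).map (fun m => (⇑θ)^[m] (x m))).prod := by
    have h2n : 2 * n - 1 = (i + n) + q := by omega
    conv_rhs => rw [h2n, List.range_add, List.map_append, List.prod_append, List.map_map]
    congr 2
  calc ((List.range i).map (fun m => (⇑θ)^[m] (x m))).prod *
        (((List.range n).map (fun t => (⇑θ)^[i + t] (x (i + t)))).prod * b) *
        ((List.range q).map (fun t => (⇑θ)^[i + 1 + t] (x (i + 1 + t + n - 1)))).prod * b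
      = (((List.range i).map (fun m => (⇑θ)^[m] (x m))).prod *
        ((List.range n).map (fun t => (⇑θ)^[i + t] (x (i + t)))).prod) *
        (b * ((List.range q).map (fun t => (⇑θ)^[i + 1 + t] (x (i + 1 + t + n - 1)))).prod) * b := by
        group
    _ = ((List.range (i + n)).map (fun m => (⇑θ)^[m] (x m))).prod *
        (((List.range q).map (fun t => (⇑θ)^[i + n + t] (x (i + n + t)))).prod * b) * b := by
        rw [hAM, hbT]
    _ = ((List.range (2 * n - 1)).map (fun m => (⇑θ)^[m] (x m))).prod * b * b := by
        rw [← mul_assoc, hfin]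

end HG

/-- The Hosszú–Gloskin (θ,b)-derived n-ary operation
f(x₁,…,xₙ) = x₁·θ(x₂)·θ²(x₃)⋯θ^{n-1}(xₙ)·b, where θ(b)=b and θ^{n-1} is
conjugation by b, is n-ary associative (0-based positions i < j < n). -/
theorem thetaDerived_assoc {G : Type*} [Group G] (n : ℕ) (hn : 2 ≤ n)
    (θ : G ≃* G) (b : G) (hb : θ b = b)
    (hpow : ∀ x : G, (⇑θ)^[n - 1] x = b * x * b⁻¹)
    (f : (ℕ → G) → G)
    (hf : ∀ x : ℕ → G,
      f x = (List.ofFn fun i : Fin n => (⇑θ)^[(i : ℕ)] (x (i : ℕ))).prod * b) :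
    ∀ (x : ℕ → G) (i j : ℕ), i < j → j < n →
      f (fun k => if k < i then x k else if k = i then f (fun t => x (i + t))
          else x (k + n - 1))
      = f (fun k => if k < j then x k else if k = j then f (fun t => x (j + t))
          else x (k + n - 1)) := by
  intro x i j hij hjn
  rw [key n hn θ b hb hpow f hf x i (lt_trans hij hjn),
    key n hn θ b hb hpow f hf x j hjn]
end

section
/- Let (G,f)=der_{θ,b}(G,·) and (H,h)=der_{η,c}(H,∗) be n-ary groups derived from groups via automorphisms θ, η and elements b, c (with θ(b)=b, θ^{n−1}(x)=bxb⁻¹, η(c)=c, η^{n−1}(y)=c∗y∗c⁻¹). Suppose a ∈ H and φ : (G,·) → (H,∗) is a group homomorphism satisfying h(a,…,a) = φ(b)∗a and φ∘θ = I_a∘η∘φ, where I_a(y)=a∗y∗a⁻¹. Then ψ(x) = φ(x)∗a is an n-ary homomorphism: ψ(f(x₁,…,xₙ)) = h(ψ(x₁),…,ψ(xₙ)) for all x₁,…,xₙ ∈ G. -/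
private def qseq {H : Type*} [Group H] (η : H ≃* H) (a : H) : ℕ → H
  | 0 => 1
  | i + 1 => a * η (qseq η a i)

private lemma iter_map_mul {H : Type*} [Group H] (η : H ≃* H) (i : ℕ) (u v : H) :
    (⇑η)^[i] (u * v) = (⇑η)^[i] u * (⇑η)^[i] v := by
  induction i with
  | zero => simp
  | succ i ih => simp [Function.iterate_succ', ih, map_mul]

private lemma qseq_succ' {H : Type*} [Group H] (η : H ≃* H) (a : H) (i : ℕ) :
    qseq η a (i + 1) = qseq η a i * (⇑η)^[i] a := by
  induction i with
  | zero => simp [qseq]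
  | succ i ih =>
      have hd : a * η (qseq η a i) = qseq η a i * (⇑η)^[i] a := ih
      rw [show qseq η a (i + 1 + 1) = a * η (qseq η a (i + 1)) from rfl, ih, map_mul,
        Function.iterate_succ', Function.comp_apply, ← mul_assoc, hd]

private lemma qseq_prod {H : Type*} [Group H] (η : H ≃* H) (a : H) (m : ℕ) :
    (List.ofFn fun j : Fin m => (⇑η)^[(j : ℕ)] a).prod = qseq η a m := by
  induction m with
  | zero => simp [qseq]
  | succ m ih =>
      rw [List.ofFn_succ', List.concat_eq_append, List.prod_append, qseq_succ']
      simp [ih]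

private lemma lemA {G H : Type*} [Group G] [Group H] (θ : G ≃* G) (η : H ≃* H)
    (a : H) (φ : G →* H) (h2 : ∀ x : G, φ (θ x) = a * η (φ x) * a⁻¹)
    (i : ℕ) (x : G) :
    φ ((⇑θ)^[i] x) = qseq η a i * (⇑η)^[i] (φ x) * (qseq η a i)⁻¹ := by
  induction i with
  | zero => simp [qseq]
  | succ i ih =>
      rw [Function.iterate_succ', Function.comp_apply, h2, ih,
        Function.iterate_succ', Function.comp_apply]
      simp [qseq, map_mul, mul_assoc]

private lemma lemB {H : Type*} [Group H] (η : H ≃* H) (a : H) (z : ℕ → H) (m : ℕ) :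
    (List.ofFn fun j : Fin m => qseq η a j * z j * (qseq η a j)⁻¹).prod =
      (List.ofFn fun j : Fin m => z j * (⇑η)^[(j : ℕ)] a).prod * (qseq η a m)⁻¹ := by
  induction m with
  | zero => simp [qseq]
  | succ m ih =>
      rw [List.ofFn_succ', List.ofFn_succ' (f := fun j : Fin (m+1) => z j * (⇑η)^[(j : ℕ)] a),
        List.concat_eq_append, List.concat_eq_append, List.prod_append, List.prod_append]
      simp only [Fin.coe_castSucc, Fin.val_last]
      rw [ih, qseq_succ']
      simp [mul_assoc]

/-- If (G,f)=der_{θ,b}(G,·), (H,h)=der_{η,c}(H,∗), a ∈ H, and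
φ : G → H is a group homomorphism with h(a,…,a) = φ(b)∗a and
φ∘θ = I_a∘η∘φ, then ψ(x) = φ(x)∗a is an n-ary homomorphism. -/
theorem polyadic_hom_of_data {G H : Type*} [Group G] [Group H] (n : ℕ) (hn : 2 ≤ n)
    (θ : G ≃* G) (b : G) (hb : θ b = b)
    (hθpow : ∀ x : G, (⇑θ)^[n - 1] x = b * x * b⁻¹)
    (η : H ≃* H) (c : H) (hc : η c = c)
    (hηpow : ∀ y : H, (⇑η)^[n - 1] y = c * y * c⁻¹)
    (f : (ℕ → G) → G)
    (hf : ∀ x : ℕ → G,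
      f x = (List.ofFn fun i : Fin n => (⇑θ)^[(i : ℕ)] (x (i : ℕ))).prod * b)
    (h : (ℕ → H) → H)
    (hh : ∀ y : ℕ → H,
      h y = (List.ofFn fun i : Fin n => (⇑η)^[(i : ℕ)] (y (i : ℕ))).prod * c)
    (a : H) (φ : G →* H)
    (h1 : h (fun _ => a) = φ b * a)
    (h2 : ∀ x : G, φ (θ x) = a * η (φ x) * a⁻¹) :
    ∀ x : ℕ → G, φ (f x) * a = h (fun k => φ (x k) * a) := by
  intro x
  have hqn : qseq η a n * c = φ b * a := by
    rw [hh] at h1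
    rw [← qseq_prod η a n]; exact h1
  rw [hf, hh, map_mul, map_list_prod, List.map_ofFn]
  have e1 : (List.ofFn (φ ∘ fun i : Fin n => (⇑θ)^[(i : ℕ)] (x (i : ℕ)))) =
      List.ofFn fun i : Fin n =>
        qseq η a (i : ℕ) * (⇑η)^[(i : ℕ)] (φ (x (i : ℕ))) * (qseq η a (i : ℕ))⁻¹ := by
    congr 1; funext i; exact lemA θ η a φ h2 _ _
  have e2 : (List.ofFn fun i : Fin n => (⇑η)^[(i : ℕ)] (φ (x (i : ℕ)) * a)) =
      List.ofFn fun i : Fin n =>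
        (⇑η)^[(i : ℕ)] (φ (x (i : ℕ))) * (⇑η)^[(i : ℕ)] a := by
    congr 1; funext i; exact iter_map_mul η _ _ _
  have e3 := lemB η a (fun k => (⇑η)^[k] (φ (x k))) n
  have hq : qseq η a n = φ b * a * c⁻¹ := by rw [← hqn]; group
  rw [e1, e2, e3, hq]; group
end

section
/- Let (G,f)=der_{θ,b}(G,·) and (H,h)=der_{η,c}(H,∗) be n-ary groups as in the Hosszú–Gloskin form, and let ψ : G → H satisfy ψ(f(x₁,…,xₙ)) = h(ψ(x₁),…,ψ(xₙ)) for all xᵢ. Set a = ψ(1_G) and φ(x) = ψ(x)∗a⁻¹. Then φ is a group homomorphism (G,·) → (H,∗), h(a,…,a) = φ(b)∗a, and φ(θ(x)) = a∗η(φ(x))∗a⁻¹ for all x ∈ G. -/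
private lemma aux_split_ofFn {M : Type*} [Monoid M] (m : ℕ) (F : ℕ → M) :
    (List.ofFn fun i : Fin (m + 2) => F (i : ℕ)).prod
      = F 0 * F 1 * (List.ofFn fun i : Fin m => F ((i : ℕ) + 2)).prod := by
  rw [List.ofFn_succ, List.ofFn_succ]
  simp only [List.prod_cons, Fin.val_succ, Fin.val_zero, ← mul_assoc]

/-- If ψ : G → H is an n-ary homomorphism between
(G,f)=der_{θ,b}(G,·) and (H,h)=der_{η,c}(H,∗), then with a = ψ(1) and
φ(x) = ψ(x)∗a⁻¹: φ is a group homomorphism, h(a,…,a) = φ(b)∗a, and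
φ(θ(x)) = a∗η(φ(x))∗a⁻¹ for all x. -/
theorem polyadic_hom_decomposition {G H : Type*} [Group G] [Group H]
    (n : ℕ) (hn : 2 ≤ n)
    (θ : G ≃* G) (b : G) (hb : θ b = b)
    (hθpow : ∀ x : G, (⇑θ)^[n - 1] x = b * x * b⁻¹)
    (η : H ≃* H) (c : H) (hc : η c = c)
    (hηpow : ∀ y : H, (⇑η)^[n - 1] y = c * y * c⁻¹)
    (f : (ℕ → G) → G)
    (hf : ∀ x : ℕ → G,
      f x = (List.ofFn fun i : Fin n => (⇑θ)^[(i : ℕ)] (x (i : ℕ))).prod * b)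
    (h : (ℕ → H) → H)
    (hh : ∀ y : ℕ → H,
      h y = (List.ofFn fun i : Fin n => (⇑η)^[(i : ℕ)] (y (i : ℕ))).prod * c)
    (ψ : G → H)
    (hψ : ∀ x : ℕ → G, ψ (f x) = h (fun k => ψ (x k))) :
    (∀ x y : G, ψ (x * y) * (ψ 1)⁻¹ = (ψ x * (ψ 1)⁻¹) * (ψ y * (ψ 1)⁻¹)) ∧
    h (fun _ => ψ 1) = (ψ b * (ψ 1)⁻¹) * ψ 1 ∧
    (∀ x : G, ψ (θ x) * (ψ 1)⁻¹ = ψ 1 * η (ψ x * (ψ 1)⁻¹) * (ψ 1)⁻¹) := by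

  obtain ⟨m, rfl⟩ : ∃ m, n = m + 2 := ⟨n - 2, by omega⟩
  have hG1 : ∀ k, (⇑θ)^[k] (1 : G) = 1 := fun k => Function.iterate_fixed (map_one θ) k
  have key : ∀ u v : G, ψ (u * θ v * b)
      = ψ u * η (ψ v) * ((List.ofFn fun i : Fin m => (⇑η)^[(i : ℕ) + 2] (ψ 1)).prod * c) := by
    intro u v
    have h0 := hψ (fun k => if k = 0 then u else if k = 1 then v else 1)
    rw [hf, hh] at h0
    rw [aux_split_ofFn m (fun k => (⇑θ)^[k] (if k = 0 then u else if k = 1 then v else 1)),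
        aux_split_ofFn m (fun k => (⇑η)^[k] (ψ (if k = 0 then u else if k = 1 then v else 1)))] at h0
    simpa [hG1, mul_assoc] using h0
  have star : ∀ u v : G, ψ (u * θ v) = ψ u * η (ψ v) * (η (ψ 1))⁻¹ := by
    intro u v
    have h1 := key u v
    have h2 := key (u * θ v) 1
    simp only [map_one] at h2
    rw [mul_one] at h2
    -- h2 : ψ (u * θ v * b) = ψ (u * θ v) * η (ψ 1) * (T * c)
    rw [h2] at h1
    have h3 : ψ (u * θ v) * η (ψ 1) = ψ u * η (ψ v) := by
      exact mul_right_cancel h1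
    exact eq_mul_inv_of_mul_eq h3
  have star2 : ∀ v : G, ψ (θ v) = ψ 1 * η (ψ v) * (η (ψ 1))⁻¹ := by
    intro v
    have := star 1 v
    rwa [one_mul] at this
  have mult : ∀ x y : G, ψ (x * y) = ψ x * (ψ 1)⁻¹ * ψ y := by
    intro x y
    have h1 := star x (θ.symm y)
    rw [MulEquiv.apply_symm_apply] at h1
    have h2 := star2 (θ.symm y)
    rw [MulEquiv.apply_symm_apply] at h2
    rw [h1, h2]
    group
  refine ⟨?_, ?_, ?_⟩
  · intro x y
    rw [mult]
    group
  · have h0 := hψ (fun _ => 1)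
    rw [hf] at h0
    simp [hG1] at h0
    rw [← h0]
    group
  · intro x
    rw [star2 x, map_mul, map_inv]
    group
end
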